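/- Consider the 2-player game on pure strategy sets {a,b} with payoffs u₁(a,a)=3, u₁(a,b)=0, u₁(b,a)=1, u₁(b,b)=2 and u₂(a,a)=0, u₂(a,b)=3, u₂(b,a)=2, u₂(b,b)=1. For possibility capacities ν, μ on {a,b} with densities λ₁=[ν](a), β₁=[ν](b), λ₂=[μ](a), β₂=[μ](b) (so max{λᵢ,βᵢ}=1), define the Choquet expected payoffs cu₁(ν,μ) = β₁∧λ₂ + 2(β₁∧β₂) + 3(λ₁∧λ₂) and cu₂(ν,μ) = 2(β₁∧λ₂) + β₁∧β₂ + 3(λ₁∧β₂). Then there is no Nash min-equilibrium: for every pair (ν,μ) there exist i ∈ {1,2} and a possibility capacity deviating in the i-th coordinate that strictly decreases cu_i. -/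

import Mathlib

/-!
It suffices to look at deviations to the two pure strategies, whose Choquet payoffs are linear:
`3λ₂` and `λ₂ + 2β₂` for player 1, `2β₁` and `β₁ + 3λ₁` for player 2. Each density has a
coordinate equal to `1`, and in each of the four resulting cases two of these four pure
deviations cannot both be unprofitable, mirroring the best-response cycle
`(a,a) → (b,a) → (b,b) → (a,b) → (a,a)` of the pure game.
-/

open Set

/-- Choquet expected payoff of player 1 in the example game, in terms of the densities
`(λ₁,β₁)` and `(λ₂,β₂)` of the two possibility strategies. -/
noncomputable def cu1 (l1 b1 l2 b2 : ℝ) : ℝ :=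
  min b1 l2 + 2 * min b1 b2 + 3 * min l1 l2

/-- Choquet expected payoff of player 2 in the example game. -/
noncomputable def cu2 (l1 b1 l2 b2 : ℝ) : ℝ :=
  2 * min b1 l2 + min b1 b2 + 3 * min l1 b2

section PurePayoffs

variable {l1 b1 l2 b2 : ℝ}

theorem cu1_one_zero (hl2 : l2 ∈ Icc (0 : ℝ) 1) (hb2 : 0 ≤ b2) : cu1 1 0 l2 b2 = 3 * l2 := by
  simp only [cu1, min_eq_left hl2.1, min_eq_left hb2, min_eq_right hl2.2]
  ring

theorem cu1_zero_one (hl2 : l2 ∈ Icc (0 : ℝ) 1) (hb2 : b2 ≤ 1) :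
    cu1 0 1 l2 b2 = l2 + 2 * b2 := by
  simp only [cu1, min_eq_right hl2.2, min_eq_right hb2, min_eq_left hl2.1]
  ring

theorem cu2_one_zero (hl1 : 0 ≤ l1) (hb1 : b1 ∈ Icc (0 : ℝ) 1) : cu2 l1 b1 1 0 = 2 * b1 := by
  simp only [cu2, min_eq_left hb1.2, min_eq_right hb1.1, min_eq_right hl1]
  ring

theorem cu2_zero_one (hl1 : l1 ≤ 1) (hb1 : b1 ∈ Icc (0 : ℝ) 1) :
    cu2 l1 b1 0 1 = b1 + 3 * l1 := by
  simp only [cu2, min_eq_right hb1.1, min_eq_left hb1.2, min_eq_left hl1]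
  ring

end PurePayoffs

theorem exists_profitable_pure_deviation {l1 b1 l2 b2 : ℝ}
    (h1 : l1 ∈ Icc (0 : ℝ) 1) (h2 : b1 ∈ Icc (0 : ℝ) 1)
    (h3 : l2 ∈ Icc (0 : ℝ) 1) (h4 : b2 ∈ Icc (0 : ℝ) 1)
    (hm1 : max l1 b1 = 1) (hm2 : max l2 b2 = 1) :
    cu1 1 0 l2 b2 < cu1 l1 b1 l2 b2 ∨ cu1 0 1 l2 b2 < cu1 l1 b1 l2 b2 ∨
      cu2 l1 b1 1 0 < cu2 l1 b1 l2 b2 ∨ cu2 l1 b1 0 1 < cu2 l1 b1 l2 b2 := by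
  rw [cu1_one_zero h3 h4.1, cu1_zero_one h3 h4.2, cu2_one_zero h1.1 h2, cu2_zero_one h1.2 h2]
  by_contra! h
  obtain ⟨h1a, h1b, h2a, h2b⟩ := h
  obtain rfl | rfl : l1 = 1 ∨ b1 = 1 := (max_eq_iff.mp hm1).imp And.left And.left <;>
    obtain rfl | rfl : l2 = 1 ∨ b2 = 1 := (max_eq_iff.mp hm2).imp And.left And.left
  · simp only [cu1, cu2, min_self, min_eq_left h2.2, min_eq_right h4.2] at h1b h2a
    linarith [le_min h2.1 h4.1, h2.1]
  · simp only [cu2, min_self, min_eq_left h2.2] at h2a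
    linarith [le_min h2.1 h3.1, h2.2]
  · simp only [cu1, cu2, min_self, min_eq_right h4.2, min_eq_left h1.2] at h1b h2b
    linarith [le_min h1.1 h4.1, h4.1]
  · simp only [cu1, cu2, min_self, min_eq_right h3.2, min_eq_left h1.2] at h1a h2a
    linarith [le_min h1.1 h3.1, h1.1]

/-- The example game in possibility capacities with Choquet payoffs has no Nash
min-equilibrium: from every strategy profile some player can strictly decrease
their expected payoff by a unilateral deviation. -/
theorem no_nash_min_equilibrium_choquet (l1 b1 l2 b2 : ℝ)
    (h1 : l1 ∈ Set.Icc (0:ℝ) 1) (h2 : b1 ∈ Set.Icc (0:ℝ) 1)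
    (h3 : l2 ∈ Set.Icc (0:ℝ) 1) (h4 : b2 ∈ Set.Icc (0:ℝ) 1)
    (hm1 : max l1 b1 = 1) (hm2 : max l2 b2 = 1) :
    (∃ l1' b1' : ℝ, l1' ∈ Set.Icc (0:ℝ) 1 ∧ b1' ∈ Set.Icc (0:ℝ) 1 ∧ max l1' b1' = 1 ∧
        cu1 l1' b1' l2 b2 < cu1 l1 b1 l2 b2) ∨
    (∃ l2' b2' : ℝ, l2' ∈ Set.Icc (0:ℝ) 1 ∧ b2' ∈ Set.Icc (0:ℝ) 1 ∧ max l2' b2' = 1 ∧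
        cu2 l1 b1 l2' b2' < cu2 l1 b1 l2 b2) := by
  have hzero : (0 : ℝ) ∈ Icc (0 : ℝ) 1 := left_mem_Icc.mpr zero_le_one
  have hone : (1 : ℝ) ∈ Icc (0 : ℝ) 1 := right_mem_Icc.mpr zero_le_one
  rcases exists_profitable_pure_deviation h1 h2 h3 h4 hm1 hm2 with h | h | h | h
  · exact .inl ⟨1, 0, hone, hzero, max_eq_left zero_le_one, h⟩
  · exact .inl ⟨0, 1, hzero, hone, max_eq_right zero_le_one, h⟩
  · exact .inr ⟨1, 0, hone, hzero, max_eq_left zero_le_one, h⟩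
  · exact .inr ⟨0, 1, hzero, hone, max_eq_right zero_le_one, h⟩
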